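/- arXiv:1806.04340 — 4 statements merged into one kernel-verified Lean document; each statement's English description precedes it below -/
import Mathlib

section
/- For every g ∈ GL₂(E), one has g ⋆ ϑ = ϑ if and only if ι(g)ᵗ·H·g = H. In other words, the stabilizer of ϑ = diag(1,−1) under the congruence action ⋆ is exactly the unitary group U(H) of the Hermitian matrix H = [[0, s],[−s, 0]]. -/
open Matrix

/-- `w₂ = [[0,1],[1,0]]`. -/
def w2 (E : Type*) [Field E] : Matrix (Fin 2) (Fin 2) E := !![0, 1; 1, 0]

/-- The congruence action `g ⋆ X := g · X · w₂ · ι(g)ᵗ · w₂`. -/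
def congAct {E : Type*} [Field E] (ι : E →+* E)
    (g X : Matrix (Fin 2) (Fin 2) E) : Matrix (Fin 2) (Fin 2) E :=
  g * X * w2 E * (g.map ι)ᵀ * w2 E

/-- The Hermitian matrix `H = [[0, s],[−s, 0]]`. -/
def Hmat {E : Type*} [Field E] (s : E) : Matrix (Fin 2) (Fin 2) E := !![0, s; -s, 0]

private lemma aux_flip {R : Type*} [CommRing R] (J g A : Matrix (Fin 2) (Fin 2) R)
    (hJ : J * J = -1) (hg : IsUnit g) (h : g * J * A = J) : A * J * g = J := by
  obtain ⟨inst⟩ := hg.nonempty_invertible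
  have hJinv : Invertible J :=
    ⟨-J, by rw [neg_mul, hJ, neg_neg], by rw [mul_neg, hJ, neg_neg]⟩
  have hJi : ⅟J = -J := invOf_eq_right_inv (by rw [mul_neg, hJ, neg_neg])
  have h1 : A = ⅟J * (⅟g * J) := by
    have h2 : ⅟J * (⅟g * (g * J * A)) = ⅟J * (⅟g * J) := by rw [h]
    rwa [mul_assoc g, invOf_mul_cancel_left, invOf_mul_cancel_left] at h2
  have e1 : J * (J * g) = -g := by rw [← mul_assoc, hJ, neg_one_mul]
  rw [h1]
  simp only [mul_assoc]
  rw [e1, mul_neg, invOf_mul_self, mul_neg_one, hJi, neg_neg]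

/-- For `g ∈ GL₂(E)`: `g ⋆ ϑ = ϑ` iff `ι(g)ᵗ·H·g = H`, i.e. the stabilizer of
`ϑ = diag(1,−1)` under the congruence action is exactly `U(H)`. -/
theorem statement5 {E : Type*} [Field E] (htwo : (2 : E) ≠ 0)
    (ι : E →+* E) (hinv : ∀ x, ι (ι x) = x) (hni : ι ≠ RingHom.id E)
    (s : E) (hs0 : s ≠ 0) (hss : ι s = -s)
    (g : Matrix (Fin 2) (Fin 2) E) (hg : IsUnit g) :
    congAct ι g !![1, 0; 0, -1] = !![1, 0; 0, -1] ↔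
      (g.map ι)ᵀ * Hmat s * g = Hmat s := by
  set J : Matrix (Fin 2) (Fin 2) E := !![0, 1; -1, 0] with hJdef
  set A : Matrix (Fin 2) (Fin 2) E := (g.map ι)ᵀ with hAdef
  have hJ : J * J = -1 := by
    ext i j
    fin_cases i <;> fin_cases j <;>
      simp [hJdef, Matrix.mul_apply, Fin.sum_univ_two]
  have hw : w2 E * w2 E = 1 := by
    ext i j
    fin_cases i <;> fin_cases j <;>
      simp [w2, Matrix.mul_apply, Fin.sum_univ_two]
  have hθw : !![(1 : E), 0; 0, -1] * w2 E = J := by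
    ext i j
    fin_cases i <;> fin_cases j <;>
      simp [w2, hJdef, Matrix.mul_apply, Fin.sum_univ_two]
  have hH : Hmat s = s • J := by
    ext i j
    fin_cases i <;> fin_cases j <;> simp [Hmat, hJdef]
  have hA : IsUnit A := by
    have h1 : IsUnit (g.map ι) := by
      have := hg.map ι.mapMatrix
      simpa using this
    rw [hAdef, Matrix.isUnit_iff_isUnit_det, Matrix.det_transpose,
      ← Matrix.isUnit_iff_isUnit_det]
    exact h1
  -- Reformulate the left-hand side.
  have lhs_iff : congAct ι g !![(1 : E), 0; 0, -1] = !![1, 0; 0, -1] ↔ g * J * A = J := by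
    unfold congAct
    rw [← hAdef, mul_assoc g, hθw]
    constructor
    · intro h
      have := congrArg (fun M => M * w2 E) h
      simpa [mul_assoc, hw, hθw] using this
    · intro h
      rw [h]
      calc J * w2 E = !![(1 : E), 0; 0, -1] * w2 E * w2 E := by rw [hθw]
        _ = !![(1 : E), 0; 0, -1] := by rw [mul_assoc, hw, mul_one]
  -- Reformulate the right-hand side.
  have rhs_iff : A * Hmat s * g = Hmat s ↔ A * J * g = J := by
    rw [hH, Matrix.mul_smul, Matrix.smul_mul]
    exact (smul_right_injective (Matrix (Fin 2) (Fin 2) E) hs0).eq_iff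
  rw [lhs_iff, rhs_iff]
  exact ⟨fun h => aux_flip J g A hJ hg h, fun h => aux_flip J A g hJ hA h⟩
end

section
/- The special unitary group of H coincides with SL₂ of the fixed field: {g ∈ M₂(E) : det g = 1 and ι(g)ᵗ·H·g = H} = {g ∈ M₂(E) : det g = 1 and every entry of g lies in F}. -/
open Matrix

/-- The special unitary group of `H` coincides with `SL₂` of the fixed field:
`{g : det g = 1 ∧ ι(g)ᵗ·H·g = H} = {g : det g = 1 ∧ all entries of g lie in F}`. -/
theorem statement8 {E : Type*} [Field E] (htwo : (2 : E) ≠ 0)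
    (ι : E →+* E) (hinv : ∀ x, ι (ι x) = x) (hni : ι ≠ RingHom.id E)
    (s : E) (hs0 : s ≠ 0) (hss : ι s = -s) :
    {g : Matrix (Fin 2) (Fin 2) E | g.det = 1 ∧ (g.map ι)ᵀ * Hmat s * g = Hmat s}
      = {g : Matrix (Fin 2) (Fin 2) E | g.det = 1 ∧ ∀ i j, ι (g i j) = g i j} := by
  ext g
  simp only [Set.mem_setOf_eq]
  rw [Matrix.det_fin_two]
  constructor
  · rintro ⟨hdet, hmat⟩
    refine ⟨hdet, ?_⟩
    rw [← Matrix.ext_iff] at hmat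
    have h00 := hmat 0 0
    have h01 := hmat 0 1
    have h10 := hmat 1 0
    have h11 := hmat 1 1
    simp [Hmat, Matrix.mul_apply, Fin.sum_univ_two] at h00 h01 h10 h11
    have e1 : ι (g 0 0) * g 1 0 = ι (g 1 0) * g 0 0 :=
      mul_left_cancel₀ hs0 (by linear_combination h00)
    have e2 : ι (g 0 0) * g 1 1 - ι (g 1 0) * g 0 1 = 1 :=
      mul_left_cancel₀ hs0 (by linear_combination h01)
    have e3 : ι (g 1 1) * g 0 0 - ι (g 0 1) * g 1 0 = 1 :=
      mul_left_cancel₀ hs0 (by linear_combination -h10)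
    have e4 : ι (g 0 1) * g 1 1 = ι (g 1 1) * g 0 1 :=
      mul_left_cancel₀ hs0 (by linear_combination h11)
    have ha : ι (g 0 0) = g 0 0 := by
      linear_combination g 0 0 * e2 - g 0 1 * e1 - ι (g 0 0) * hdet
    have hb : ι (g 0 1) = g 0 1 := by
      linear_combination g 0 0 * e4 + g 0 1 * e3 - ι (g 0 1) * hdet
    have hc : ι (g 1 0) = g 1 0 := by
      linear_combination -(g 1 1) * e1 + g 1 0 * e2 - ι (g 1 0) * hdet
    have hd : ι (g 1 1) = g 1 1 := by
      linear_combination g 1 1 * e3 + g 1 0 * e4 - ι (g 1 1) * hdet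
    intro i j
    fin_cases i <;> fin_cases j
    exacts [ha, hb, hc, hd]
  · rintro ⟨hdet, hfix⟩
    refine ⟨hdet, ?_⟩
    have ha := hfix 0 0
    have hb := hfix 0 1
    have hc := hfix 1 0
    have hd := hfix 1 1
    rw [← Matrix.ext_iff]
    intro i j
    fin_cases i <;> fin_cases j <;>
      simp [Hmat, Matrix.mul_apply, Fin.sum_univ_two, ha, hb, hc, hd]
    all_goals
      first
        | ring1
        | linear_combination s * hdet
        | linear_combination (-1 : E) * s * hdet
end

section
/- For all x, y ∈ F, the commutator of u₂(x) and u₁(y) in GL₄(E) is given by u₂(x)·u₁(y)·u₂(x)⁻¹·u₁(y)⁻¹ = I₄ − s²xy·E₁₃ + s³xy²·E₁₄ + s²xy·E₂₄, i.e. it equals the matrix [[1, 0, −s²xy, s³xy²],[0, 1, 0, s²xy],[0, 0, 1, 0],[0, 0, 0, 1]]; in particular this commutator lies in the subgroup C. -/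
/-!
Both generators are unipotent with `u(t)⁻¹ = u(-t)`, so the commutator is an explicit product of
four unitriangular matrices. It is `n(0, -s²xy, s³xy²)`, and since `ι s = -s` while `x, y ∈ F`,
`ι (s³xy²) = -s³xy²`, which is exactly the defining condition of `N₁` when `u = 0`.
-/

open Matrix

/-- `n(u, x₁, x₂) = [[1,u,x₁,x₂],[0,1,0,−ι(x₁)],[0,0,1,−ι(u)],[0,0,0,1]]`. -/
def nmat {E : Type*} [Field E] (ι : E →+* E) (u x₁ x₂ : E) :
    Matrix (Fin 4) (Fin 4) E :=
  !![1, u, x₁, x₂; 0, 1, 0, -ι x₁; 0, 0, 1, -ι u; 0, 0, 0, 1]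

/-- `C = {n(u, x₁, x₂) ∈ N₁ : u ∈ F}`. -/
def Cset {E : Type*} [Field E] (ι : E →+* E) : Set (Matrix (Fin 4) (Fin 4) E) :=
  {m | ∃ u x₁ x₂ : E, ι u = u ∧ x₂ + ι x₂ + u * ι x₁ + x₁ * ι u = 0 ∧
    m = nmat ι u x₁ x₂}

/-- `u₂(x) = I₄ + s·x·E₂₃`. -/
def u2mat {E : Type*} [Field E] (s x : E) : Matrix (Fin 4) (Fin 4) E :=
  1 + (s * x) • Matrix.single 1 2 1

/-- `u₁(y) = I₄ + s·y·(E₁₂ + E₃₄)`. -/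
def u1mat {E : Type*} [Field E] (s y : E) : Matrix (Fin 4) (Fin 4) E :=
  1 + (s * y) • (Matrix.single 0 1 1 + Matrix.single 2 3 1)

section

variable {E : Type*} [Field E]

theorem u2mat_eq (s x : E) :
    u2mat s x = !![1, 0, 0, 0; 0, 1, s * x, 0; 0, 0, 1, 0; 0, 0, 0, 1] := by
  ext i j
  fin_cases i <;> fin_cases j <;> simp [u2mat, Matrix.single]

theorem u1mat_eq (s y : E) :
    u1mat s y = !![1, s * y, 0, 0; 0, 1, 0, 0; 0, 0, 1, s * y; 0, 0, 0, 1] := by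
  ext i j
  fin_cases i <;> fin_cases j <;> simp [u1mat, Matrix.single]

theorem u2mat_mul_u2mat_neg (s x : E) : u2mat s x * u2mat s (-x) = 1 := by
  rw [u2mat_eq, u2mat_eq, ← Matrix.ext_iff]
  intro i j
  fin_cases i <;> fin_cases j <;> simp [Matrix.mul_apply, Fin.sum_univ_four]

theorem u1mat_mul_u1mat_neg (s y : E) : u1mat s y * u1mat s (-y) = 1 := by
  rw [u1mat_eq, u1mat_eq, ← Matrix.ext_iff]
  intro i j
  fin_cases i <;> fin_cases j <;> simp [Matrix.mul_apply, Fin.sum_univ_four]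

theorem inv_u2mat (s x : E) : (u2mat s x)⁻¹ = u2mat s (-x) :=
  Matrix.inv_eq_right_inv (u2mat_mul_u2mat_neg s x)

theorem inv_u1mat (s y : E) : (u1mat s y)⁻¹ = u1mat s (-y) :=
  Matrix.inv_eq_right_inv (u1mat_mul_u1mat_neg s y)

theorem u2mat_u1mat_commutator (s x y : E) :
    u2mat s x * u1mat s y * (u2mat s x)⁻¹ * (u1mat s y)⁻¹
      = !![1, 0, -(s ^ 2 * x * y), s ^ 3 * x * y ^ 2;
           0, 1, 0, s ^ 2 * x * y;
           0, 0, 1, 0;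
           0, 0, 0, 1] := by
  rw [inv_u2mat, inv_u1mat, u2mat_eq, u1mat_eq, u2mat_eq, u1mat_eq]
  ext i j
  fin_cases i <;> fin_cases j <;> simp [Matrix.mul_apply, Fin.sum_univ_four] <;> ring

theorem nmat_zero_mem_Cset (ι : E →+* E) {x₁ x₂ : E} (h : ι x₂ = -x₂) :
    nmat ι 0 x₁ x₂ ∈ Cset ι :=
  ⟨0, x₁, x₂, map_zero ι, by simp [h], rfl⟩

end

theorem statement12_general {E : Type*} [Field E]
    (ι : E →+* E)
    (s : E) (hss : ι s = -s)
    (x y : E) (hx : ι x = x) (hy : ι y = y) :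
    u2mat s x * u1mat s y * (u2mat s x)⁻¹ * (u1mat s y)⁻¹
        = (1 : Matrix (Fin 4) (Fin 4) E)
            + (-(s ^ 2 * x * y)) • Matrix.single 0 2 1
            + (s ^ 3 * x * y ^ 2) • Matrix.single 0 3 1
            + (s ^ 2 * x * y) • Matrix.single 1 3 1 ∧
    u2mat s x * u1mat s y * (u2mat s x)⁻¹ * (u1mat s y)⁻¹
        = !![1, 0, -(s ^ 2 * x * y), s ^ 3 * x * y ^ 2;
             0, 1, 0, s ^ 2 * x * y;
             0, 0, 1, 0;
             0, 0, 0, 1] ∧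
    u2mat s x * u1mat s y * (u2mat s x)⁻¹ * (u1mat s y)⁻¹ ∈ Cset ι := by
  have hcomm := u2mat_u1mat_commutator s x y
  refine ⟨?_, hcomm, ?_⟩
  · rw [hcomm]
    ext i j
    fin_cases i <;> fin_cases j <;> simp [Matrix.single]
  · have hnmat : u2mat s x * u1mat s y * (u2mat s x)⁻¹ * (u1mat s y)⁻¹
        = nmat ι 0 (-(s ^ 2 * x * y)) (s ^ 3 * x * y ^ 2) := by
      rw [hcomm, nmat]
      simp [hss, hx, hy]
    rw [hnmat]
    exact nmat_zero_mem_Cset ι (by simp only [map_mul, map_pow, hss, hx, hy]; ring)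

/-- For `x, y ∈ F`, the commutator `u₂(x)·u₁(y)·u₂(x)⁻¹·u₁(y)⁻¹` equals
`I₄ − s²xy·E₁₃ + s³xy²·E₁₄ + s²xy·E₂₄`, i.e. the matrix
`[[1, 0, −s²xy, s³xy²],[0, 1, 0, s²xy],[0, 0, 1, 0],[0, 0, 0, 1]]`;
in particular it lies in the subgroup `C`. -/
theorem statement12 {E : Type*} [Field E] (htwo : (2 : E) ≠ 0)
    (ι : E →+* E) (hinv : ∀ x, ι (ι x) = x) (hni : ι ≠ RingHom.id E)
    (s : E) (hs0 : s ≠ 0) (hss : ι s = -s)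
    (x y : E) (hx : ι x = x) (hy : ι y = y) :
    u2mat s x * u1mat s y * (u2mat s x)⁻¹ * (u1mat s y)⁻¹
        = (1 : Matrix (Fin 4) (Fin 4) E)
            + (-(s ^ 2 * x * y)) • Matrix.single 0 2 1
            + (s ^ 3 * x * y ^ 2) • Matrix.single 0 3 1
            + (s ^ 2 * x * y) • Matrix.single 1 3 1 ∧
    u2mat s x * u1mat s y * (u2mat s x)⁻¹ * (u1mat s y)⁻¹
        = !![1, 0, -(s ^ 2 * x * y), s ^ 3 * x * y ^ 2;
             0, 1, 0, s ^ 2 * x * y;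
             0, 0, 1, 0;
             0, 0, 0, 1] ∧
    u2mat s x * u1mat s y * (u2mat s x)⁻¹ * (u1mat s y)⁻¹ ∈ Cset ι :=
  statement12_general ι s hss x y hx hy
end

section
/- Let α ∈ E with tr(α) ≠ 0, and set v := (1, α) and u₀ := (1, −ι(α)) in E². Then v and u₀ are orthogonal for the hyperbolic Hermitian form and form a basis of E², and the map sending λ ∈ E¹ := {λ ∈ E : λ·ι(λ) = 1} to the unique E-linear automorphism g_λ of E² with g_λ·v = v and g_λ·u₀ = λ·u₀ is a group isomorphism from E¹ onto the stabilizer {g ∈ GL₂(E) : ι(g)ᵗ w₂ g = w₂ and g·v = v}. (Thus the stabilizer of the character ψ_{[31];v_α} in U(1,1) for anisotropic v_α is isomorphic to U(1).) -/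
open Matrix

/-- The hyperbolic Hermitian form on `E²` with Gram matrix `w₂ = [[0,1],[1,0]]`:
`⟨u, v⟩ = ι(u₁)v₂ + ι(u₂)v₁`. -/
def herm {E : Type*} [Field E] (ι : E →+* E) (u v : Fin 2 → E) : E :=
  ι (u 0) * v 1 + ι (u 1) * v 0

/-! The vectors `v = (1, α)` and `u₀ = (1, -ι α)` are orthogonal and, since
`⟨u₀, u₀⟩ = -tr α ≠ 0`, form a basis of `E²`. A unitary `g` fixing `v` preserves the line
`v^⊥ = E u₀`, so `g u₀ = l u₀`, and `⟨g u₀, g u₀⟩ = ⟨u₀, u₀⟩` forces `l ι(l) = 1`; hence `g` is the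
matrix `P diag(1, l) P⁻¹` in the basis `P = (v u₀)`. Conversely that matrix is unitary
whenever `l ι(l) = 1`, and `l ↦ P diag(1, l) P⁻¹` is visibly multiplicative and injective. -/

section HyperbolicForm

variable {E : Type*} [Field E] (ι : E →+* E)

theorem herm_eq_dotProduct (x y : Fin 2 → E) : herm ι x y = (ι ∘ x) ⬝ᵥ (w2 E *ᵥ y) := by
  simp [herm, w2, dotProduct, mulVec, Fin.sum_univ_two]

theorem herm_mulVec_mulVec {g : Matrix (Fin 2) (Fin 2) E}
    (hg : (g.map ι)ᵀ * w2 E * g = w2 E) (x y : Fin 2 → E) :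
    herm ι (g *ᵥ x) (g *ᵥ y) = herm ι x y := by
  have hx : ι ∘ (g *ᵥ x) = g.map ι *ᵥ (ι ∘ x) := funext (RingHom.map_mulVec ι g x)
  rw [herm_eq_dotProduct, herm_eq_dotProduct, hx, ← vecMul_transpose (g.map ι),
    ← dotProduct_mulVec, mulVec_mulVec, mulVec_mulVec, hg]

theorem herm_smul_smul (a b : E) (x y : Fin 2 → E) :
    herm ι (a • x) (b • y) = ι a * b * herm ι x y := by
  simp only [herm, Pi.smul_apply, smul_eq_mul, map_mul]
  ring

end HyperbolicForm

theorem linearIndependent_pair_one_one {E : Type*} [Field E] {a b : E} (hab : a ≠ b) :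
    LinearIndependent E ![![(1 : E), a], ![1, b]] := by
  rw [linearIndependent_fin2]
  refine ⟨fun h => by simpa using congrFun h 0, fun c h => hab ?_⟩
  have hc : c = 1 := by simpa using congrFun h 0
  simpa [hc] using (congrFun h 1).symm

theorem Matrix.eq_of_mulVec_eq_on_spanning {R m n : Type*} [CommSemiring R] [Fintype n]
    [DecidableEq n] {A B : Matrix m n R} {s : Set (n → R)} (hs : Submodule.span R s = ⊤)
    (h : ∀ x ∈ s, A *ᵥ x = B *ᵥ x) : A = B :=
  Matrix.toLin'.injective (LinearMap.ext_on hs fun x hx => by simpa using h x hx)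

section Stabilizer

variable {E : Type*} [Field E] (ι : E →+* E) (α : E)

/-- `P diag(1, l) P⁻¹`, where `P` has columns `v = (1, α)` and `u₀ = (1, -ι α)`. -/
def stabMatrix (l : E) : Matrix (Fin 2) (Fin 2) E :=
  (α + ι α)⁻¹ • !![ι α + l * α, 1 - l; α * ι α * (1 - l), α + l * ι α]

variable {ι α}

theorem eq_smul_of_herm_eq_zero {w : Fin 2 → E} (hw : herm ι ![1, α] w = 0) :
    w = w 0 • ![1, -ι α] := by
  have hw1 : w 1 = -ι α * w 0 := by
    simp only [herm, cons_val_zero, cons_val_one, map_one, one_mul] at hw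
    linear_combination hw
  ext i
  fin_cases i <;> simp [hw1, mul_comm]

theorem herm_v_u₀ : herm ι ![1, α] ![1, -ι α] = 0 := by
  simp [herm]

theorem herm_u₀_v (hinv : ∀ x, ι (ι x) = x) : herm ι ![1, -ι α] ![1, α] = 0 := by
  simp [herm, hinv]

theorem herm_u₀_u₀ (hinv : ∀ x, ι (ι x) = x) : herm ι ![1, -ι α] ![1, -ι α] = -(α + ι α) := by
  simp [herm, hinv]

variable (hα : α + ι α ≠ 0)
include hα

theorem linearIndependent_v_u₀ : LinearIndependent E ![![(1 : E), α], ![1, -ι α]] :=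
  linearIndependent_pair_one_one fun h => hα (by linear_combination h)

theorem span_v_u₀ : Submodule.span E ({![(1 : E), α], ![1, -ι α]} : Set (Fin 2 → E)) = ⊤ := by
  rw [← range_cons_cons_empty]
  exact (linearIndependent_v_u₀ hα).span_eq_top_of_card_eq_finrank (by simp)

theorem stabMatrix_mulVec_v (l : E) : stabMatrix ι α l *ᵥ ![1, α] = ![1, α] := by
  ext i
  fin_cases i <;> simp [stabMatrix, mulVec, dotProduct, Fin.sum_univ_two] <;> field_simp <;> ring

theorem stabMatrix_mulVec_u₀ (l : E) :
    stabMatrix ι α l *ᵥ ![1, -ι α] = l • ![1, -ι α] := by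
  ext i
  fin_cases i <;> simp [stabMatrix, mulVec, dotProduct, Fin.sum_univ_two] <;> field_simp <;> ring

theorem eq_stabMatrix {l : E} {g : Matrix (Fin 2) (Fin 2) E} (hv : g *ᵥ ![1, α] = ![1, α])
    (hu : g *ᵥ ![1, -ι α] = l • ![1, -ι α]) : g = stabMatrix ι α l := by
  refine eq_of_mulVec_eq_on_spanning (span_v_u₀ hα) ?_
  rintro x (rfl | rfl)
  · rw [hv, stabMatrix_mulVec_v hα]
  · rw [hu, stabMatrix_mulVec_u₀ hα]

theorem stabMatrix_mul (l m : E) :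
    stabMatrix ι α (l * m) = stabMatrix ι α l * stabMatrix ι α m := by
  refine (eq_stabMatrix hα ?_ ?_).symm
  · rw [← mulVec_mulVec, stabMatrix_mulVec_v hα, stabMatrix_mulVec_v hα]
  · rw [← mulVec_mulVec, stabMatrix_mulVec_u₀ hα, mulVec_smul, stabMatrix_mulVec_u₀ hα,
      smul_smul, mul_comm]

theorem stabMatrix_one : stabMatrix ι α 1 = 1 :=
  (eq_stabMatrix hα (one_mulVec _) (by rw [one_mulVec, one_smul])).symm

theorem isUnit_stabMatrix {l : E} (hl : l * ι l = 1) : IsUnit (stabMatrix ι α l) := by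
  have h : stabMatrix ι α l * stabMatrix ι α (ι l) = 1 := by
    rw [← stabMatrix_mul hα, hl, stabMatrix_one hα]
  exact IsUnit.of_mul_eq_one _ h

theorem stabMatrix_injective {l m : E} (h : stabMatrix ι α l = stabMatrix ι α m) : l = m := by
  have hu := stabMatrix_mulVec_u₀ hα l
  rw [h, stabMatrix_mulVec_u₀ hα] at hu
  simpa using (congrFun hu 0).symm

theorem stabMatrix_unitary (hinv : ∀ x, ι (ι x) = x) {l : E} (hl : l * ι l = 1) :
    ((stabMatrix ι α l).map ι)ᵀ * w2 E * stabMatrix ι α l = w2 E := by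
  have hιinv : ι (α + ι α)⁻¹ = (α + ι α)⁻¹ := by rw [map_inv₀, map_add, hinv, add_comm]
  ext i j
  fin_cases i <;> fin_cases j <;>
    simp [stabMatrix, w2, mul_apply, Fin.sum_univ_two, hinv, hιinv] <;>
    field_simp
  · linear_combination (-(α * ι α * (α + ι α))) * hl
  · linear_combination (ι α * (α + ι α)) * hl
  · linear_combination (α * (α + ι α)) * hl
  · linear_combination (-(α + ι α)) * hl

theorem exists_eq_stabMatrix_of_unitary (hinv : ∀ x, ι (ι x) = x) {g : Matrix (Fin 2) (Fin 2) E}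
    (hg : (g.map ι)ᵀ * w2 E * g = w2 E) (hv : g *ᵥ ![1, α] = ![1, α]) :
    ∃ l, l * ι l = 1 ∧ g = stabMatrix ι α l := by
  set w := g *ᵥ ![1, -ι α]
  have hw : w = w 0 • ![1, -ι α] := by
    refine eq_smul_of_herm_eq_zero ?_
    rw [← hv, herm_mulVec_mulVec ι hg, herm_v_u₀]
  have hnorm : ι (w 0) * w 0 * herm ι ![1, -ι α] ![1, -ι α] = herm ι ![1, -ι α] ![1, -ι α] := by
    rw [← herm_smul_smul, ← hw, herm_mulVec_mulVec ι hg]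
  rw [herm_u₀_u₀ hinv] at hnorm
  refine ⟨w 0, ?_, eq_stabMatrix hα hv hw⟩
  rw [mul_comm]
  exact mul_right_cancel₀ (neg_ne_zero.mpr hα) (by rw [hnorm, one_mul])

end Stabilizer

theorem statement16_general {E : Type*} [Field E]
    (ι : E →+* E) (hinv : ∀ x, ι (ι x) = x)
    (α : E) (hα : α + ι α ≠ 0) :
    herm ι ![1, α] ![1, -ι α] = 0 ∧ herm ι ![1, -ι α] ![1, α] = 0 ∧
    LinearIndependent E ![![(1 : E), α], ![1, -ι α]] ∧
    Submodule.span E ({![(1 : E), α], ![1, -ι α]} : Set (Fin 2 → E)) = ⊤ ∧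
    ∃ Φ : E → Matrix (Fin 2) (Fin 2) E,
      -- `Φ l` is the linear automorphism `g_l` with `g_l v = v` and `g_l u₀ = l·u₀`
      (∀ l : E, l * ι l = 1 → IsUnit (Φ l) ∧
        (Φ l).mulVec ![1, α] = ![1, α] ∧
        (Φ l).mulVec ![1, -ι α] = l • ![1, -ι α]) ∧
      -- uniqueness of `g_l`
      (∀ l : E, l * ι l = 1 → ∀ g : Matrix (Fin 2) (Fin 2) E,
        g.mulVec ![1, α] = ![1, α] → g.mulVec ![1, -ι α] = l • ![1, -ι α] →
        g = Φ l) ∧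
      -- `Φ` is a group homomorphism on `E¹`
      (∀ l m : E, l * ι l = 1 → m * ι m = 1 → Φ (l * m) = Φ l * Φ m) ∧
      -- `Φ` is injective on `E¹`
      (∀ l m : E, l * ι l = 1 → m * ι m = 1 → Φ l = Φ m → l = m) ∧
      -- `Φ` maps `E¹` into the stabilizer of `v` in `U(w₂)`
      (∀ l : E, l * ι l = 1 →
        ((Φ l).map ι)ᵀ * w2 E * Φ l = w2 E ∧ (Φ l).mulVec ![1, α] = ![1, α]) ∧
      -- `Φ` maps `E¹` onto the stabilizer of `v` in `U(w₂)`
      (∀ g : Matrix (Fin 2) (Fin 2) E, IsUnit g →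
        (g.map ι)ᵀ * w2 E * g = w2 E → g.mulVec ![1, α] = ![1, α] →
        ∃ l : E, l * ι l = 1 ∧ g = Φ l) := by
  refine ⟨herm_v_u₀, herm_u₀_v hinv, linearIndependent_v_u₀ hα, span_v_u₀ hα, stabMatrix ι α,
    fun l hl => ⟨isUnit_stabMatrix hα hl, stabMatrix_mulVec_v hα l, stabMatrix_mulVec_u₀ hα l⟩,
    fun _ _ _ => eq_stabMatrix hα, fun l m _ _ => stabMatrix_mul hα l m,
    fun l m _ _ => stabMatrix_injective hα,
    fun l hl => ⟨stabMatrix_unitary hα hinv hl, stabMatrix_mulVec_v hα l⟩,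
    fun g _ hg hv => exists_eq_stabMatrix_of_unitary hα hinv hg hv⟩

/-- Let `α ∈ E` with `tr(α) ≠ 0`, `v = (1, α)`, `u₀ = (1, −ι(α))`. Then `v` and `u₀`
are orthogonal for the hyperbolic Hermitian form and form a basis of `E²`, and
`λ ↦ g_λ` (where `g_λ` is the unique linear automorphism with `g_λ v = v`,
`g_λ u₀ = λ·u₀`) is a group isomorphism from `E¹ = {λ : λ·ι(λ) = 1}` onto the
stabilizer `{g ∈ U(w₂) : g·v = v}`. -/
theorem statement16 {E : Type*} [Field E] (htwo : (2 : E) ≠ 0)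
    (ι : E →+* E) (hinv : ∀ x, ι (ι x) = x) (hni : ι ≠ RingHom.id E)
    (s : E) (hs0 : s ≠ 0) (hss : ι s = -s)
    (α : E) (hα : α + ι α ≠ 0) :
    herm ι ![1, α] ![1, -ι α] = 0 ∧ herm ι ![1, -ι α] ![1, α] = 0 ∧
    LinearIndependent E ![![(1 : E), α], ![1, -ι α]] ∧
    Submodule.span E ({![(1 : E), α], ![1, -ι α]} : Set (Fin 2 → E)) = ⊤ ∧
    ∃ Φ : E → Matrix (Fin 2) (Fin 2) E,
      -- `Φ l` is the linear automorphism `g_l` with `g_l v = v` and `g_l u₀ = l·u₀`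
      (∀ l : E, l * ι l = 1 → IsUnit (Φ l) ∧
        (Φ l).mulVec ![1, α] = ![1, α] ∧
        (Φ l).mulVec ![1, -ι α] = l • ![1, -ι α]) ∧
      -- uniqueness of `g_l`
      (∀ l : E, l * ι l = 1 → ∀ g : Matrix (Fin 2) (Fin 2) E,
        g.mulVec ![1, α] = ![1, α] → g.mulVec ![1, -ι α] = l • ![1, -ι α] →
        g = Φ l) ∧
      -- `Φ` is a group homomorphism on `E¹`
      (∀ l m : E, l * ι l = 1 → m * ι m = 1 → Φ (l * m) = Φ l * Φ m) ∧
      -- `Φ` is injective on `E¹`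
      (∀ l m : E, l * ι l = 1 → m * ι m = 1 → Φ l = Φ m → l = m) ∧
      -- `Φ` maps `E¹` into the stabilizer of `v` in `U(w₂)`
      (∀ l : E, l * ι l = 1 →
        ((Φ l).map ι)ᵀ * w2 E * Φ l = w2 E ∧ (Φ l).mulVec ![1, α] = ![1, α]) ∧
      -- `Φ` maps `E¹` onto the stabilizer of `v` in `U(w₂)`
      (∀ g : Matrix (Fin 2) (Fin 2) E, IsUnit g →
        (g.map ι)ᵀ * w2 E * g = w2 E → g.mulVec ![1, α] = ![1, α] →
        ∃ l : E, l * ι l = 1 ∧ g = Φ l) :=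
  statement16_general ι hinv α hα
end
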